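/- arXiv:2108.07066 — 3 statements merged into one kernel-verified Lean document; each statement's English description precedes it below -/
import Mathlib

section
/- Let k, d, d' ≥ 0 be integers, and let G be a graph whose vertex set is partitioned into sets V_1, V_2, …, V_n such that for 1 ≤ i ≤ n the induced subgraph G[V_i] admits a (k,d)-colouring, and for 1 ≤ i < n every vertex of V_i has at most d' neighbours in V_{i+1} ∪ ⋯ ∪ V_n. Then G admits a (k, d+d')-colouring. -/
open SimpleGraph Set

/-- `G` contains no induced subgraph isomorphic to `H`. -/
def IsInducedFree {V : Type*} {W : Type*} (G : SimpleGraph V) (H : SimpleGraph W) : Prop :=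
  ∀ s : Set V, ¬ Nonempty ((G.induce s) ≃g H)

/-- The double star `H_s`: two adjacent internal vertices `0` and `1`; `0` is adjacent to the
`s` leaves `2,…,s+1` and `1` is adjacent to the `s` leaves `s+2,…,2s+1`. -/
def doubleStarGraph (s : ℕ) : SimpleGraph (Fin (2*s+2)) :=
  SimpleGraph.fromRel (fun a b =>
    ((a : ℕ) = 0 ∧ (b : ℕ) = 1) ∨
    ((a : ℕ) = 0 ∧ 2 ≤ (b : ℕ) ∧ (b : ℕ) ≤ s+1) ∨
    ((a : ℕ) = 1 ∧ s+2 ≤ (b : ℕ)))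

/-- A graph has degeneracy at most `d` if every nonempty subgraph has a vertex whose degree
in that subgraph is at most `d`. -/
def DegeneracyAtMost {V : Type*} (G : SimpleGraph V) (d : ℕ) : Prop :=
  ∀ H : G.Subgraph, H.verts.Nonempty → ∃ v ∈ H.verts, (H.neighborSet v).ncard ≤ d

/-- A `(k,d)`-colouring: a partition of the vertex set into `k` parts, each inducing a
subgraph of degeneracy at most `d`. -/
def KDColorable {V : Type*} (G : SimpleGraph V) (k d : ℕ) : Prop :=
  ∃ f : V → Fin k, ∀ i : Fin k, DegeneracyAtMost (G.induce {v | f v = i}) d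

/-- `G` contains the complete bipartite graph `K_{t,t}` as a (not necessarily induced)
subgraph. -/
def ContainsKtt {V : Type*} (G : SimpleGraph V) (t : ℕ) : Prop :=
  ∃ A B : Finset V, A.card = t ∧ B.card = t ∧ Disjoint A B ∧
    ∀ a ∈ A, ∀ b ∈ B, G.Adj a b

/-- A set of vertices is stable (independent) if no two of its members are adjacent. -/
def IsStableSet {V : Type*} (G : SimpleGraph V) (S : Set V) : Prop :=
  ∀ a ∈ S, ∀ b ∈ S, a ≠ b → ¬ G.Adj a b

/-- An `s`-template in `G`: a clique `L0` complete to all the `L i`, pairwise disjoint sets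
`L 1, …, L k` (here indexed by `Fin k`) whose sizes lie between `ω^{s+5}` and `14 ω^{s+6}`,
such that each vertex of `L i` has at most `ω^{s+3}` non-neighbours in each other `L j`. -/
def IsTemplate {V : Type*} (G : SimpleGraph V) (s : ℕ) (L0 : Set V) {k : ℕ}
    (L : Fin k → Set V) : Prop :=
  (∀ i : Fin k, Disjoint L0 (L i)) ∧
  (Pairwise fun i j : Fin k => Disjoint (L i) (L j)) ∧
  G.IsClique L0 ∧
  (∀ u ∈ L0, ∀ i : Fin k, ∀ v ∈ L i, G.Adj u v) ∧
  (∀ i : Fin k, G.cliqueNum ^ (s+5) ≤ (L i).ncard ∧ (L i).ncard ≤ 14 * G.cliqueNum ^ (s+6)) ∧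
  (∀ i j : Fin k, i ≠ j → ∀ v ∈ L i,
    ({u ∈ L j | ¬ G.Adj v u}).ncard ≤ G.cliqueNum ^ (s+3))

/-- The value of an `s`-template. -/
noncomputable def templateValue {V : Type*} (G : SimpleGraph V) (s : ℕ) (L0 : Set V) {k : ℕ}
    (L : Fin k → Set V) : ℕ :=
  (⋃ i, L i).ncard + 7 * G.cliqueNum ^ (s+5) * L0.ncard + k * G.cliqueNum ^ (s+5)

/-- An optimal `s`-template: one of maximum value among all `s`-templates in `G`. -/
def IsOptimalTemplate {V : Type*} (G : SimpleGraph V) (s : ℕ) (L0 : Set V) {k : ℕ}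
    (L : Fin k → Set V) : Prop :=
  IsTemplate G s L0 L ∧
  ∀ (k' : ℕ) (L0' : Set V) (L' : Fin k' → Set V), IsTemplate G s L0' L' →
    templateValue G s L0' L' ≤ templateValue G s L0 L

/-- `V(𝓛)`, the vertex set of a template. -/
def templateVerts {V : Type*} (L0 : Set V) {k : ℕ} (L : Fin k → Set V) : Set V :=
  L0 ∪ ⋃ i, L i

/-- `N(𝓛)`: the vertices outside `V(𝓛)` with a neighbour in `L 1 ∪ ⋯ ∪ L k`. -/
def templateNbhd {V : Type*} (G : SimpleGraph V) (L0 : Set V) {k : ℕ}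
    (L : Fin k → Set V) : Set V :=
  {v | v ∉ templateVerts L0 L ∧ ∃ i : Fin k, ∃ u ∈ L i, G.Adj v u}


/-- A vertex `v` is pendant with respect to the template: there are distinct `i, j`, a vertex
`u ∈ L j` and a stable set `S ⊆ L i` of `s+1` common neighbours of `u` such that `v` is not
adjacent to `u` and `v` has exactly one neighbour in `S`. -/
def TemplatePendant {V : Type*} (G : SimpleGraph V) (s : ℕ) {k : ℕ}
    (L : Fin k → Set V) (v : V) : Prop :=
  ∃ i j : Fin k, i ≠ j ∧ ∃ u ∈ L j, ∃ S : Set V, S ⊆ L i ∧ S.ncard = s + 1 ∧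
    IsStableSet G S ∧ (∀ w ∈ S, G.Adj u w) ∧ ¬ G.Adj v u ∧ ({w ∈ S | G.Adj v w}).ncard = 1

/-- A vertex `v` is dense with respect to the template: there are `j` and `u ∈ L j` such that
for all `i ≠ j`, fewer than `ω^{s+2}/14` vertices of `L i` are adjacent to `u` and not to `v`. -/
def TemplateDense {V : Type*} (G : SimpleGraph V) (s : ℕ) {k : ℕ}
    (L : Fin k → Set V) (v : V) : Prop :=
  ∃ j : Fin k, ∃ u ∈ L j, ∀ i : Fin k, i ≠ j →
    14 * ({w ∈ L i | G.Adj u w ∧ ¬ G.Adj v w}).ncard < G.cliqueNum ^ (s+2)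

/-- A vertex `v` is pure with respect to the template: it has no neighbour in at least two of
the sets `L i`, and for each `i`, either it has no neighbour in `L i` or it has at most
`ω^{s+2}/7` non-neighbours in `L i`. -/
def TemplatePure {V : Type*} (G : SimpleGraph V) (s : ℕ) {k : ℕ}
    (L : Fin k → Set V) (v : V) : Prop :=
  (∃ i₁ i₂ : Fin k, i₁ ≠ i₂ ∧ (∀ w ∈ L i₁, ¬ G.Adj v w) ∧ (∀ w ∈ L i₂, ¬ G.Adj v w)) ∧
  (∀ i : Fin k, (∀ w ∈ L i, ¬ G.Adj v w) ∨
    7 * ({w ∈ L i | ¬ G.Adj v w}).ncard ≤ G.cliqueNum ^ (s+2))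

/-- `M_I`: the pure vertices `v` (with respect to the template) whose set `I_v` of indices `i`
such that `v` has a neighbour in `L i` equals `I`. -/
def templatePart {V : Type*} (G : SimpleGraph V) (s : ℕ) (L0 : Set V) {k : ℕ}
    (L : Fin k → Set V) (I : Set (Fin k)) : Set V :=
  {v | v ∈ templateNbhd G L0 L ∧ TemplatePure G s L v ∧
    ∀ i : Fin k, (∃ u ∈ L i, G.Adj v u) ↔ i ∈ I}

/-- Two disjoint sets `A, B` are `s`-crowded if there is no stable set meeting each of them
in exactly `s` vertices. -/
def SCrowded {V : Type*} (G : SimpleGraph V) (s : ℕ) (A B : Set V) : Prop :=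
  ¬ ∃ X : Set V, IsStableSet G X ∧ (X ∩ A).ncard = s ∧ (X ∩ B).ncard = s

/-- `c` satisfies the Kővári–Sós–Turán-type bound for `H_s`: every `H_s`-free graph either
contains `K_{t,t}` as a subgraph or has degeneracy less than `t^c`. -/
def KSTBound (s c : ℕ) : Prop :=
  ∀ (W : Type) [Fintype W], ∀ G' : SimpleGraph W, IsInducedFree G' (doubleStarGraph s) →
    ∀ t : ℕ, ContainsKtt G' t ∨ ∃ D : ℕ, D < t ^ c ∧ DegeneracyAtMost G' D

/-- `Z(𝓛)`: the union of `L0` with the set of vertices of `N(𝓛)` having at most `ω^{s+2}/4`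
non-neighbours in each `L i`. -/
def templateZ {V : Type*} (G : SimpleGraph V) (s : ℕ) (L0 : Set V) {k : ℕ}
    (L : Fin k → Set V) : Set V :=
  L0 ∪ {v ∈ templateNbhd G L0 L |
    ∀ i : Fin k, 4 * ({u ∈ L i | ¬ G.Adj v u}).ncard ≤ G.cliqueNum ^ (s+2)}

/-- `Y(𝓛) = (V(𝓛) ∪ N(𝓛)) \ Z(𝓛)`. -/
def templateY {V : Type*} (G : SimpleGraph V) (s : ℕ) (L0 : Set V) {k : ℕ}
    (L : Fin k → Set V) : Set V :=
  (templateVerts L0 L ∪ templateNbhd G L0 L) \ templateZ G s L0 L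

/-- `N_A(𝓛)`: the vertices of `A \ V(𝓛)` with a neighbour in `L 1 ∪ ⋯ ∪ L k`. -/
def templateNbhdIn {V : Type*} (G : SimpleGraph V) (A : Set V) (L0 : Set V) {k : ℕ}
    (L : Fin k → Set V) : Set V :=
  {v ∈ A | v ∉ templateVerts L0 L ∧ ∃ i : Fin k, ∃ u ∈ L i, G.Adj v u}

/-- `Z_A(𝓛)`: the union of `L0` with the set of vertices of `A \ V(𝓛)` having at most
`ω^{s+2}/4` non-neighbours in each `L i`. -/
def templateZIn {V : Type*} (G : SimpleGraph V) (s : ℕ) (A : Set V) (L0 : Set V) {k : ℕ}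
    (L : Fin k → Set V) : Set V :=
  L0 ∪ {v ∈ A | v ∉ templateVerts L0 L ∧
    ∀ i : Fin k, 4 * ({u ∈ L i | ¬ G.Adj v u}).ncard ≤ G.cliqueNum ^ (s+2)}

/-- `Y_A(𝓛) = (V(𝓛) ∪ N_A(𝓛)) \ Z_A(𝓛)`. -/
def templateYIn {V : Type*} (G : SimpleGraph V) (s : ℕ) (A : Set V) (L0 : Set V) {k : ℕ}
    (L : Fin k → Set V) : Set V :=
  (templateVerts L0 L ∪ templateNbhdIn G A L0 L) \ templateZIn G s A L0 L

/-!
Colour every vertex by the colouring of its own part. Given a nonempty subgraph `H` of one colour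
class, let `V_i` be the first part that `H` meets and pick a vertex `v` of `H ∩ V_i` of degree at
most `d` in `H[V_i]`; every other neighbour of `v` in `H` lies in a later part, so there are at
most `d'` of them.
-/

namespace SimpleGraph

variable {V W : Type*} {G : SimpleGraph V} {G' : SimpleGraph W}

theorem Subgraph.neighborSet_map_embedding (f : G' ↪g G) (H : G'.Subgraph) (v : W) :
    (H.map f.toHom).neighborSet (f v) = f '' H.neighborSet v := by
  ext u
  simp only [Subgraph.mem_neighborSet, Subgraph.map_adj, Relation.Map, Set.mem_image]
  constructor
  · rintro ⟨a, b, hab, ha, rfl⟩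
    rw [f.injective ha] at hab
    exact ⟨b, hab, rfl⟩
  · rintro ⟨b, hb, rfl⟩
    exact ⟨v, b, hb, rfl, rfl⟩

theorem Subgraph.image_neighborSet_comap_embedding (f : G' ↪g G) (H : G.Subgraph)
    (hH : H.verts ⊆ Set.range f) (v : W) :
    f '' (H.comap f.toHom).neighborSet v = H.neighborSet (f v) := by
  ext u
  simp only [Subgraph.mem_neighborSet, Subgraph.comap_adj, Set.mem_image]
  constructor
  · rintro ⟨b, ⟨-, hb⟩, rfl⟩
    exact hb
  · intro hu
    obtain ⟨b, rfl⟩ := hH (H.edge_vert hu.symm)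
    exact ⟨b, ⟨f.map_adj_iff.1 (H.adj_sub hu), hu⟩, rfl⟩

end SimpleGraph

section Degeneracy

variable {V W : Type*} {G : SimpleGraph V} {G' : SimpleGraph W} {d : ℕ}

theorem degeneracyAtMost_iff_of_embedding (f : G' ↪g G) :
    DegeneracyAtMost G' d ↔ ∀ H : G.Subgraph, H.verts.Nonempty → H.verts ⊆ Set.range f →
      ∃ v ∈ H.verts, (H.neighborSet v).ncard ≤ d := by
  constructor
  · intro hG' H hne hH
    obtain ⟨v, hv, hdeg⟩ := hG' (H.comap f.toHom) (by
      obtain ⟨_, hx⟩ := hne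
      obtain ⟨w, rfl⟩ := hH hx
      exact ⟨w, hx⟩)
    refine ⟨f v, hv, ?_⟩
    rwa [← Subgraph.image_neighborSet_comap_embedding f H hH,
      Set.ncard_image_of_injective _ f.injective]
  · intro hG H hne
    obtain ⟨_, ⟨v, hv, rfl⟩, hdeg⟩ := hG (H.map f.toHom) (hne.image _)
      (Set.image_subset_range _ _)
    refine ⟨v, hv, ?_⟩
    change ((H.map f.toHom).neighborSet (f v)).ncard ≤ d at hdeg
    rwa [Subgraph.neighborSet_map_embedding, Set.ncard_image_of_injective _ f.injective] at hdeg

theorem degeneracyAtMost_induce_iff {s : Set V} :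
    DegeneracyAtMost (G.induce s) d ↔ ∀ H : G.Subgraph, H.verts.Nonempty → H.verts ⊆ s →
      ∃ v ∈ H.verts, (H.neighborSet v).ncard ≤ d := by
  have hrange : Set.range (Embedding.induce s : G.induce s ↪g G) = s := Subtype.range_coe
  rw [degeneracyAtMost_iff_of_embedding (Embedding.induce s), hrange]

theorem DegeneracyAtMost.exists_ncard_neighborSet_le_of_induce_induce {s : Set V} {t : Set s}
    (h : DegeneracyAtMost ((G.induce s).induce t) d) (H : G.Subgraph) (hne : H.verts.Nonempty)
    (hH : ∀ v ∈ H.verts, ∃ hv : v ∈ s, ⟨v, hv⟩ ∈ t) :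
    ∃ v ∈ H.verts, (H.neighborSet v).ncard ≤ d := by
  refine (degeneracyAtMost_iff_of_embedding ((Embedding.induce s).comp (Embedding.induce t))).1
    h H hne fun v hv => ?_
  obtain ⟨hs, ht⟩ := hH v hv
  exact ⟨⟨⟨v, hs⟩, ht⟩, rfl⟩

end Degeneracy

/-- The chaining lemma: if `V(G)` is partitioned into `V_1, …, V_n` where each part is
`(k,d)`-colourable and each vertex of `V_i` has at most `d'` neighbours in the later parts,
then `G` is `(k, d+d')`-colourable. -/
theorem chaining {V : Type*} [Fintype V] (G : SimpleGraph V) (k d d' n : ℕ)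
    (W : Fin n → Set V)
    (hdisj : Pairwise fun i j : Fin n => Disjoint (W i) (W j))
    (hcover : (⋃ i, W i) = Set.univ)
    (hcol : ∀ i : Fin n, KDColorable (G.induce (W i)) k d)
    (hfew : ∀ i : Fin n, ∀ v ∈ W i,
      ({u | (∃ j : Fin n, i < j ∧ u ∈ W j) ∧ G.Adj v u}).ncard ≤ d') :
    KDColorable G k (d + d') := by
  choose F hF using hcol
  choose idx hidx using fun v => Set.mem_iUnion.1 (hcover ▸ Set.mem_univ v)
  have idx_eq {v i} (hv : v ∈ W i) : idx v = i :=
    hdisj.eq (Set.not_disjoint_iff.2 ⟨v, hidx v, hv⟩)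
  let f : V → Fin k := fun v => F (idx v) ⟨v, hidx v⟩
  have hf {v i} (hv : v ∈ W i) : f v = F i ⟨v, hv⟩ := by
    obtain rfl := idx_eq hv
    rfl
  refine ⟨f, fun c => degeneracyAtMost_induce_iff.2 fun H hne hH => ?_⟩
  obtain ⟨i, ⟨x, hxH, hxi⟩, hmin⟩ := wellFounded_lt.has_min {i | (H.verts ∩ W i).Nonempty}
    (let ⟨x, hx⟩ := hne; ⟨idx x, x, hx, hidx x⟩)
  set K := H.induce (H.verts ∩ W i)
  obtain ⟨v, ⟨hvH, hvi⟩, hK⟩ :=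
    (hF i c).exists_ncard_neighborSet_le_of_induce_induce K ⟨x, hxH, hxi⟩
      fun u ⟨huH, hui⟩ => ⟨hui, (hf hui).symm.trans (hH huH)⟩
  have hsplit : H.neighborSet v ⊆
      K.neighborSet v ∪ {u | (∃ j : Fin n, i < j ∧ u ∈ W j) ∧ G.Adj v u} := by
    intro u hu
    have huH := H.edge_vert hu.symm
    by_cases hui : u ∈ W i
    · exact Or.inl ⟨⟨hvH, hvi⟩, ⟨huH, hui⟩, hu⟩
    · refine Or.inr ⟨⟨idx u, ?_, hidx u⟩, H.adj_sub hu⟩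
      exact lt_of_le_of_ne (not_lt.1 (hmin _ ⟨u, huH, hidx u⟩)) fun h => hui (h ▸ hidx u)
  refine ⟨v, hvH, ?_⟩
  calc (H.neighborSet v).ncard
      ≤ (K.neighborSet v).ncard + ({u | (∃ j : Fin n, i < j ∧ u ∈ W j) ∧ G.Adj v u}).ncard :=
        (Set.ncard_le_ncard hsplit).trans (Set.ncard_union_le _ _)
    _ ≤ d + d' := add_le_add hK (hfew i v hvi)
end

section
/- Let s ≥ 1 be an integer, let G be a graph with clique number ω ≥ 4, and let (L_0, L_1, …, L_k) be an optimal s-template in G whose value is at least 28ω^{s+6}. Suppose A and B are disjoint subsets of L_1 with |L_1 ∖ (A ∪ B)| ≤ ω^{s+3}, such that every vertex in A has fewer than ω^s non-neighbours in B. Then either |B| < 14ω^{s+1} or A = ∅. -/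
open SimpleGraph Set

/-!
Write `P = ω^{s+5}` and `q = ω^{s+3}`, and suppose `a ∈ A` and `|B| ≥ 14ω^{s+1}`. Moving a vertex
`v ∈ L i` into `L0`, and shrinking every part to the neighbourhood of `v`, gains `7P` in value;
optimality therefore forces `v` to have at least `4P` non-neighbours in `L i`. For `v = a` all but
`ω^s + q` of them lie in `A`, so `|A| ≥ P`. Double counting the non-edges between `A` and `B`
(using `|A| ≤ 14ω^{s+6}`) gives a vertex of `B` with fewer than `P` non-neighbours in `A`, so
`|B| ≥ 2P`, and shows that all but `14q` vertices of `B` have at most `q` non-neighbours in `A`.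
Splitting `L i` into `A` and these vertices then gives a template with one more part, and of larger
value, since it loses only `L i \ (A ∪ B)` and the `14q` exceptional vertices, fewer than
`15q < P`.
-/

theorem Nat.succ_mul_pow_lt_pow_add_two {n : ℕ} (hn : 2 ≤ n) (m : ℕ) :
    (n + 1) * n ^ m < n ^ (m + 2) := by
  have : n + 1 < n * n := by nlinarith
  calc (n + 1) * n ^ m < n * n * n ^ m := by gcongr
    _ = n ^ (m + 2) := by ring

section

variable {V : Type*} [Finite V]

theorem Set.ncard_sep_le_add_ncard_sdiff_union (X A B : Set V) (p : V → Prop) :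
    {u ∈ X | p u}.ncard ≤ {u ∈ A | p u}.ncard + {u ∈ B | p u}.ncard + (X \ (A ∪ B)).ncard := by
  have hcover : {u ∈ X | p u} ⊆ {u ∈ A | p u} ∪ {u ∈ B | p u} ∪ (X \ (A ∪ B)) := by
    rintro u ⟨hu, hpu⟩
    by_cases huA : u ∈ A
    · exact Or.inl (Or.inl ⟨huA, hpu⟩)
    by_cases huB : u ∈ B
    · exact Or.inl (Or.inr ⟨huB, hpu⟩)
    exact Or.inr ⟨hu, fun h ↦ h.elim huA huB⟩
  exact (ncard_le_ncard hcover).trans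
    ((ncard_union_le _ _).trans (Nat.add_le_add_right (ncard_union_le _ _) _))

theorem SimpleGraph.exists_isNClique_of_few_nonadj {ι : Type*} (G : SimpleGraph V)
    (L : ι → Set V) {q : ℕ}
    (hcross : ∀ i j, i ≠ j → ∀ v ∈ L i, {u ∈ L j | ¬ G.Adj v u}.ncard ≤ q)
    (T : Finset ι) (hsize : ∀ i ∈ T, T.card * q < (L i).ncard) :
    ∃ W : Finset V, G.IsNClique T.card W ∧ ∀ x ∈ W, ∃ i ∈ T, x ∈ L i := by
  classical
  induction T using Finset.induction with
  | empty => exact ⟨∅, by simp [isNClique_empty], by simp⟩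
  | @insert a t ha ih =>
    rw [Finset.card_insert_of_notMem ha] at hsize ⊢
    obtain ⟨W, hW, hWL⟩ := ih fun i hi ↦
      (Nat.mul_le_mul_right q t.card.le_succ).trans_lt (hsize i (Finset.mem_insert_of_mem hi))
    have hbad : (⋃ y ∈ W, {u ∈ L a | ¬ G.Adj y u}).ncard < (L a).ncard := by
      calc (⋃ y ∈ W, {u ∈ L a | ¬ G.Adj y u}).ncard
          ≤ ∑ y ∈ W, {u ∈ L a | ¬ G.Adj y u}.ncard := W.set_ncard_biUnion_le _
        _ ≤ W.card * q := by
          refine Finset.sum_le_card_nsmul _ _ _ fun y hy ↦ ?_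
          obtain ⟨j, hj, hyj⟩ := hWL y hy
          exact hcross j a (fun h ↦ ha (h ▸ hj)) y hyj
        _ < (L a).ncard := by
          rw [hW.card_eq]
          exact (Nat.mul_le_mul_right q t.card.le_succ).trans_lt (hsize a (by simp))
    obtain ⟨x, hxa, hxW⟩ := Set.sdiff_nonempty_of_ncard_lt_ncard hbad
    have hadj : ∀ y ∈ W, G.Adj y x := fun y hy ↦ by
      by_contra h
      exact hxW (Set.mem_biUnion hy ⟨hxa, h⟩)
    refine ⟨insert x W, hW.insert fun y hy ↦ (hadj y hy).symm, ?_⟩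
    rintro y hy
    rcases Finset.mem_insert.mp hy with rfl | hy
    · exact ⟨a, by simp, hxa⟩
    · obtain ⟨j, hj, hyj⟩ := hWL y hy
      exact ⟨j, Finset.mem_insert_of_mem hj, hyj⟩

theorem SimpleGraph.ncard_many_nonadj_mul_lt (G : SimpleGraph V) {A B : Set V}
    (hA : A.Nonempty) {m : ℕ} (h : ∀ a ∈ A, {u ∈ B | ¬ G.Adj a u}.ncard < m) (c : ℕ) :
    {u ∈ B | c ≤ {a ∈ A | ¬ G.Adj u a}.ncard}.ncard * c < A.ncard * m := by
  classical
  have := Fintype.ofFinite V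
  have key := Finset.card_nsmul_lt_card_nsmul_of_le_of_lt (R := ℕ) (fun u a ↦ ¬ G.Adj u a)
    (s := {u ∈ B | c ≤ {a ∈ A | ¬ G.Adj u a}.ncard}.toFinset) (t := A.toFinset) (m := c) (n := m)
    (by simpa using hA) (fun u hu ↦ ?_) (fun a ha ↦ ?_)
  · simpa [ncard_eq_toFinset_card'] using key
  · rw [← ncard_coe_finset, Finset.coe_bipartiteAbove]
    simp only [mem_toFinset]
    exact (mem_toFinset.1 hu).2
  · refine lt_of_le_of_lt ?_ (h a (by simpa using ha))
    rw [← ncard_coe_finset, Finset.coe_bipartiteBelow]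
    simp only [mem_toFinset]
    exact ncard_le_ncard fun u ⟨hu, hua⟩ ↦ ⟨hu.1, fun h' ↦ hua h'.symm⟩

theorem ncard_iUnion_le_compl_inter_add {k : ℕ} (L : Fin k → Set V) (T : Finset (Fin k))
    (N : Set V) :
    (⋃ j, L j).ncard ≤ (⋃ r, L (Tᶜ.orderEmbOfFin rfl r) ∩ N).ncard + ∑ j ∈ T, (L j).ncard +
      ∑ j ∈ Tᶜ, (L j \ N).ncard := by
  have hcover : (⋃ j, L j) ⊆ (⋃ r, L (Tᶜ.orderEmbOfFin rfl r) ∩ N) ∪ (⋃ j ∈ T, L j) ∪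
      ⋃ j ∈ Tᶜ, L j \ N := by
    intro x hx
    obtain ⟨j, hxj⟩ := mem_iUnion.1 hx
    by_cases hjT : j ∈ T
    · exact Or.inl (Or.inr (mem_biUnion hjT hxj))
    by_cases hxN : x ∈ N
    · obtain ⟨r, rfl⟩ : j ∈ Set.range (Tᶜ.orderEmbOfFin rfl) := by
        simpa [Finset.range_orderEmbOfFin]
      exact Or.inl (Or.inl (mem_iUnion_of_mem r ⟨hxj, hxN⟩))
    · exact Or.inr (mem_biUnion (Finset.mem_compl.2 hjT) ⟨hxj, hxN⟩)
  refine (ncard_le_ncard hcover).trans <| (ncard_union_le _ _).trans ?_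
  gcongr
  · exact (ncard_union_le _ _).trans (by gcongr; exact T.set_ncard_biUnion_le _)
  · exact Tᶜ.set_ncard_biUnion_le _

variable {G : SimpleGraph V} {s : ℕ} {L0 : Set V} {k : ℕ} {L : Fin k → Set V}

theorem IsTemplate.le_cliqueNum (hT : IsTemplate G s L0 L) (hω : 2 ≤ G.cliqueNum) :
    k ≤ G.cliqueNum := by
  obtain ⟨-, -, -, -, hsize, hcross⟩ := hT
  by_contra! hk
  obtain ⟨T, -, hTcard⟩ := Finset.exists_subset_card_eq
    (show G.cliqueNum + 1 ≤ (Finset.univ : Finset (Fin k)).card by simpa using hk)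
  obtain ⟨W, hW, -⟩ := G.exists_isNClique_of_few_nonadj L hcross T fun i _ ↦ by
    rw [hTcard]
    exact (Nat.succ_mul_pow_lt_pow_add_two hω _).trans_le (hsize i).1
  have := hW.isClique.card_le_cliqueNum
  rw [hW.card_eq, hTcard] at this
  omega

theorem IsTemplate.mul_pow_lt (hT : IsTemplate G s L0 L) (hω : 2 ≤ G.cliqueNum) :
    k * G.cliqueNum ^ (s+3) < G.cliqueNum ^ (s+5) :=
  calc k * G.cliqueNum ^ (s+3) ≤ (G.cliqueNum + 1) * G.cliqueNum ^ (s+3) := by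
        gcongr; exact (hT.le_cliqueNum hω).trans (Nat.le_succ _)
    _ < G.cliqueNum ^ (s+5) := Nat.succ_mul_pow_lt_pow_add_two hω _

theorem IsTemplate.ncard_sdiff_commonNbhd_le (hT : IsTemplate G s L0 L) {W : Finset V}
    {j : Fin k} (hW : ∀ c ∈ W, ∃ i ≠ j, c ∈ L i) :
    (L j \ {x | ∀ c ∈ W, G.Adj c x}).ncard ≤ W.card * G.cliqueNum ^ (s+3) := by
  obtain ⟨-, -, -, -, -, hcross⟩ := hT
  have hcover : L j \ {x | ∀ c ∈ W, G.Adj c x} ⊆ ⋃ c ∈ W, {u ∈ L j | ¬ G.Adj c u} := by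
    rintro x ⟨hx, hxN⟩
    simp only [mem_ofPred_eq, not_forall] at hxN
    obtain ⟨c, hc, hcx⟩ := hxN
    exact mem_biUnion hc ⟨hx, hcx⟩
  refine (ncard_le_ncard hcover).trans <| (W.set_ncard_biUnion_le _).trans <|
    Finset.sum_le_card_nsmul _ _ _ fun c hc ↦ ?_
  obtain ⟨i, hij, hci⟩ := hW c hc
  exact hcross i j hij c hci

theorem IsTemplate.refine (hT : IsTemplate G s L0 L) {C : Set V} (hC : G.IsClique C)
    (hCL : C ⊆ ⋃ i, L i) {k' : ℕ} (L' : Fin k' → Set V) (f : Fin k' → Fin k)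
    (hsub : ∀ r, L' r ⊆ L (f r) ∩ {x | ∀ c ∈ C, G.Adj c x})
    (hsize : ∀ r, G.cliqueNum ^ (s+5) ≤ (L' r).ncard)
    (hsame : ∀ r r', r ≠ r' → f r = f r' → Disjoint (L' r) (L' r') ∧
      ∀ v ∈ L' r, {u ∈ L' r' | ¬ G.Adj v u}.ncard ≤ G.cliqueNum ^ (s+3)) :
    IsTemplate G s (L0 ∪ C) L' := by
  obtain ⟨hd0, hdp, hcl, hcomp, hsize0, hcross⟩ := hT
  have hsubL : ∀ r, L' r ⊆ L (f r) := fun r ↦ (hsub r).trans inter_subset_left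
  have hL0C : ∀ u ∈ L0, ∀ c ∈ C, G.Adj u c := fun u hu c hc ↦ by
    obtain ⟨i, hci⟩ := mem_iUnion.1 (hCL hc)
    exact hcomp u hu i c hci
  refine ⟨fun r ↦ ?_, fun r r' hne ↦ ?_, ?_, ?_, fun r ↦ ?_, fun r r' hne v hv ↦ ?_⟩
  · refine disjoint_union_left.2 ⟨(hd0 (f r)).mono_right (hsubL r), disjoint_left.2 ?_⟩
    exact fun c hc hc' ↦ G.irrefl ((hsub r hc').2 c hc)
  · by_cases h : f r = f r'
    · exact (hsame r r' hne h).1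
    · exact (hdp h).mono (hsubL r) (hsubL r')
  · exact pairwise_union.2 ⟨hcl, hC, fun u hu c hc _ ↦ ⟨hL0C u hu c hc, (hL0C u hu c hc).symm⟩⟩
  · rintro u (hu | hu) r v hv
    · exact hcomp u hu (f r) v (hsubL r hv)
    · exact (hsub r hv).2 u hu
  · exact ⟨hsize r, (ncard_le_ncard (hsubL r)).trans (hsize0 (f r)).2⟩
  · by_cases h : f r = f r'
    · exact (hsame r r' hne h).2 v hv
    · exact (ncard_le_ncard (t := {u ∈ L (f r') | ¬ G.Adj v u})
        fun u hu ↦ ⟨hsubL r' hu.1, hu.2⟩).trans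
        (hcross _ _ h v (hsubL r hv))

theorem IsOptimalTemplate.value_refine_le (hT : IsOptimalTemplate G s L0 L) {C : Set V}
    (hC : G.IsClique C) (hCL : C ⊆ ⋃ i, L i) {k' : ℕ} (L' : Fin k' → Set V) (f : Fin k' → Fin k)
    (hsub : ∀ r, L' r ⊆ L (f r) ∩ {x | ∀ c ∈ C, G.Adj c x})
    (hsize : ∀ r, G.cliqueNum ^ (s+5) ≤ (L' r).ncard)
    (hsame : ∀ r r', r ≠ r' → f r = f r' → Disjoint (L' r) (L' r') ∧
      ∀ v ∈ L' r, {u ∈ L' r' | ¬ G.Adj v u}.ncard ≤ G.cliqueNum ^ (s+3)) :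
    (⋃ r, L' r).ncard + 7 * G.cliqueNum ^ (s+5) * C.ncard + k' * G.cliqueNum ^ (s+5) ≤
      (⋃ i, L i).ncard + k * G.cliqueNum ^ (s+5) := by
  have hL0C : Disjoint L0 C := by
    refine disjoint_left.2 fun u hu huC ↦ ?_
    obtain ⟨i, hui⟩ := mem_iUnion.1 (hCL huC)
    exact disjoint_left.1 (hT.1.1 i) hu hui
  have := hT.2 k' _ L' (hT.1.refine hC hCL L' f hsub hsize hsame)
  rw [templateValue, templateValue, ncard_union_eq hL0C, mul_add] at this
  omega

-- Otherwise absorb a clique transversal of the parts of size `< 5P` into `L0` and drop those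
-- parts. Each dropped part gains `7P` and costs less: its `< 5P` vertices, the `P` of the term
-- `k * P`, and at most `k * q ≤ P` vertices trimmed from the remaining parts.
theorem IsOptimalTemplate.five_mul_le_ncard (hT : IsOptimalTemplate G s L0 L)
    (hω : 2 ≤ G.cliqueNum) (i : Fin k) : 5 * G.cliqueNum ^ (s+5) ≤ (L i).ncard := by
  classical
  obtain ⟨-, -, -, -, hsize, hcross⟩ := hT.1
  set P := G.cliqueNum ^ (s+5)
  set q := G.cliqueNum ^ (s+3)
  by_contra! hi
  set T : Finset (Fin k) := {j | (L j).ncard < 5 * P}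
  have hkq : k * q < P := hT.1.mul_pow_lt hω
  have hTk : T.card ≤ k := by simpa using T.card_le_univ
  have htq : T.card * q < P := (Nat.mul_le_mul_right q hTk).trans_lt hkq
  obtain ⟨W, hW, hWL⟩ := G.exists_isNClique_of_few_nonadj L hcross T fun j _ ↦
    htq.trans_le (hsize j).1
  set N := {x | ∀ c ∈ W, G.Adj c x}
  have hmiss : ∀ j ∉ T, (L j \ N).ncard ≤ T.card * q := fun j hj ↦ by
    rw [← hW.card_eq]
    refine hT.1.ncard_sdiff_commonNbhd_le fun c hc ↦ ?_
    obtain ⟨i, hiT, hci⟩ := hWL c hc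
    exact ⟨i, fun h ↦ hj (h ▸ hiT), hci⟩
  set e := Tᶜ.orderEmbOfFin rfl
  have heT : ∀ r, e r ∉ T := fun r ↦ Finset.mem_compl.1 (Tᶜ.orderEmbOfFin_mem rfl r)
  have hval := hT.value_refine_le (C := W) hW.isClique
    (fun c hc ↦ by obtain ⟨j, -, hcj⟩ := hWL c hc; exact mem_iUnion_of_mem j hcj)
    (fun r ↦ L (e r) ∩ N) e (fun _ ↦ subset_rfl)
    (fun r ↦ by
      have hsplit := ncard_inter_add_ncard_sdiff_eq_ncard (L (e r)) N
      have hmiss := hmiss (e r) (heT r)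
      have hlarge : 5 * P ≤ (L (e r)).ncard := not_lt.1 fun h ↦ heT r (by simpa [T] using h)
      change P ≤ _
      omega)
    (fun r r' hne h ↦ absurd (e.injective h) hne)
  have hunion : (⋃ j, L j).ncard ≤ (⋃ r, L (e r) ∩ N).ncard + ∑ j ∈ T, (L j).ncard +
      Tᶜ.card * (T.card * q) :=
    (ncard_iUnion_le_compl_inter_add L T N).trans <| Nat.add_le_add_left
      (Finset.sum_le_card_nsmul _ _ _ fun j hj ↦ hmiss j (Finset.mem_compl.1 hj)) _
  have hsmall : ∑ j ∈ T, (L j).ncard < T.card * (5 * P) := by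
    have hlt : ∀ j ∈ T, (L j).ncard < 5 * P := fun j hj ↦ (Finset.mem_filter.1 hj).2
    simpa using
      Finset.sum_lt_sum_of_nonempty ⟨i, Finset.mem_filter.2 ⟨Finset.mem_univ _, hi⟩⟩ hlt
  have hk : Tᶜ.card + T.card = k := by
    rw [add_comm, Finset.card_add_card_compl, Fintype.card_fin]
  have hWcard : (W : Set V).ncard = T.card := by rw [ncard_coe_finset, hW.card_eq]
  have hmq : Tᶜ.card * (T.card * q) ≤ T.card * P := by
    rw [mul_left_comm]
    exact Nat.mul_le_mul_left _ ((Nat.mul_le_mul_right q (by omega)).trans hkq.le)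
  have hkP : (Tᶜ.card + T.card) * P = k * P := by rw [hk]
  change _ + 7 * P * _ + _ * P ≤ _ + k * P at hval
  rw [hWcard] at hval
  nlinarith

theorem IsOptimalTemplate.four_mul_le_ncard_nonadj (hT : IsOptimalTemplate G s L0 L)
    (hω : 2 ≤ G.cliqueNum) {i : Fin k} {v : V} (hv : v ∈ L i) :
    4 * G.cliqueNum ^ (s+5) ≤ {u ∈ L i | ¬ G.Adj v u}.ncard := by
  obtain ⟨-, -, -, -, -, hcross⟩ := hT.1
  set P := G.cliqueNum ^ (s+5)
  set q := G.cliqueNum ^ (s+3)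
  by_contra! hi
  have hkq : k * q < P := hT.1.mul_pow_lt hω
  have hnonadj : ∀ j ≠ i, {u ∈ L j | ¬ G.Adj v u}.ncard ≤ q :=
    fun j hj ↦ hcross i j hj.symm v hv
  have hfew : ∀ j, {u ∈ L j | ¬ G.Adj v u}.ncard < 4 * P := fun j ↦ by
    rcases eq_or_ne j i with rfl | hj
    · exact hi
    · have : q ≤ P := Nat.pow_le_pow_right (by omega) (by omega)
      have := hnonadj j hj
      omega
  have hval := hT.value_refine_le (C := {v}) (isClique_singleton v)
    (singleton_subset_iff.2 (mem_iUnion_of_mem i hv)) (fun j ↦ L j ∩ {u | G.Adj v u}) id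
    (fun j ↦ by simp)
    (fun j ↦ by
      have hsplit : (L j ∩ {u | G.Adj v u}).ncard + {u ∈ L j | ¬ G.Adj v u}.ncard =
          (L j).ncard := ncard_inter_add_ncard_sdiff_eq_ncard _ _
      have := hT.five_mul_le_ncard hω j
      have := hfew j
      show P ≤ (L j ∩ {u | G.Adj v u}).ncard
      omega)
    (fun j j' hne h ↦ absurd h hne)
  have hcover : (⋃ j, L j) ⊆ (⋃ j, L j ∩ {u | G.Adj v u}) ∪ ⋃ j, {u ∈ L j | ¬ G.Adj v u} := by
    intro x hx
    obtain ⟨j, hxj⟩ := mem_iUnion.1 hx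
    by_cases hvx : G.Adj v x
    · exact Or.inl (mem_iUnion_of_mem j ⟨hxj, hvx⟩)
    · exact Or.inr (mem_iUnion_of_mem j ⟨hxj, hvx⟩)
  have hsum : ∑ j, {u ∈ L j | ¬ G.Adj v u}.ncard ≤ {u ∈ L i | ¬ G.Adj v u}.ncard + k * q := by
    rw [← Finset.add_sum_erase _ _ (Finset.mem_univ i)]
    gcongr
    refine (Finset.sum_le_card_nsmul _ _ q fun j hj ↦
      hnonadj j (Finset.ne_of_mem_erase hj)).trans ?_
    simp only [smul_eq_mul]
    gcongr
    exact (Finset.card_erase_le).trans (by simp)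
  have hunion := (ncard_le_ncard hcover).trans <| (ncard_union_le _ _).trans <|
    add_le_add_right (ncard_iUnion_le_of_fintype _) _
  rw [ncard_singleton] at hval
  omega

theorem IsOptimalTemplate.le_ncard_sdiff_of_split (hT : IsOptimalTemplate G s L0 L)
    {i : Fin k} {A D : Set V} (hA : A ⊆ L i) (hD : D ⊆ L i) (hAD : Disjoint A D)
    (hAsize : G.cliqueNum ^ (s+5) ≤ A.ncard) (hDsize : G.cliqueNum ^ (s+5) ≤ D.ncard)
    (hAD' : ∀ v ∈ A, {u ∈ D | ¬ G.Adj v u}.ncard ≤ G.cliqueNum ^ (s+3))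
    (hDA : ∀ v ∈ D, {u ∈ A | ¬ G.Adj v u}.ncard ≤ G.cliqueNum ^ (s+3)) :
    G.cliqueNum ^ (s+5) ≤ (L i \ (A ∪ D)).ncard := by
  obtain ⟨-, -, -, -, hsize, -⟩ := hT.1
  set L' : Fin (k+1) → Set V := Fin.lastCases D (Function.update L i A)
  set f : Fin (k+1) → Fin k := Fin.lastCases i id
  have hupdate : ∀ j, Function.update L i A j ⊆ L j := fun j ↦ by
    rcases eq_or_ne j i with rfl | hj
    · simpa using hA
    · simp [hj]
  have hval := hT.value_refine_le (C := ∅) isClique_empty (empty_subset _) L' f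
    (fun r ↦ by
      induction r using Fin.lastCases with
      | last => simpa [L', f] using hD
      | cast j => simpa [L', f] using hupdate j)
    (fun r ↦ by
      induction r using Fin.lastCases with
      | last => simpa [L', f] using hDsize
      | cast j =>
        rcases eq_or_ne j i with rfl | hj
        · simpa [L'] using hAsize
        · simpa [L', hj] using (hsize j).1)
    (fun r r' hne h ↦ by
      induction r using Fin.lastCases with
      | last =>
        induction r' using Fin.lastCases with
        | last => exact absurd rfl hne
        | cast j =>
          obtain rfl : i = j := by simpa [f] using h
          simpa [L'] using ⟨hAD.symm, hDA⟩
      | cast j =>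
        induction r' using Fin.lastCases with
        | last =>
          obtain rfl : j = i := by simpa [f] using h
          simpa [L'] using ⟨hAD, hAD'⟩
        | cast j' =>
          obtain rfl : j = j' := by simpa [f] using h
          exact absurd rfl hne)
  have hcover : (⋃ j, L j) ⊆ (⋃ r, L' r) ∪ (L i \ (A ∪ D)) := by
    intro x hx
    obtain ⟨j, hxj⟩ := mem_iUnion.1 hx
    rcases eq_or_ne j i with rfl | hj
    · by_cases hxA : x ∈ A
      · exact Or.inl (mem_iUnion_of_mem (Fin.castSucc j) (by simpa [L'] using hxA))
      by_cases hxD : x ∈ D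
      · exact Or.inl (mem_iUnion_of_mem (Fin.last k) (by simpa [L'] using hxD))
      exact Or.inr ⟨hxj, fun h ↦ h.elim hxA hxD⟩
    · exact Or.inl (mem_iUnion_of_mem (Fin.castSucc j) (by simpa [L', hj] using hxj))
  have := (ncard_le_ncard hcover).trans (ncard_union_le _ _)
  rw [ncard_empty] at hval
  linarith

variable {i : Fin k} {A B : Set V}

theorem IsOptimalTemplate.pow_le_ncard_left (hT : IsOptimalTemplate G s L0 L)
    (hω : 2 ≤ G.cliqueNum) (hA : A ⊆ L i)
    (hrest : (L i \ (A ∪ B)).ncard ≤ G.cliqueNum ^ (s+3))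
    (hfew : ∀ v ∈ A, {u ∈ B | ¬ G.Adj v u}.ncard < G.cliqueNum ^ s) {a : V} (ha : a ∈ A) :
    G.cliqueNum ^ (s+5) ≤ A.ncard := by
  have h4 := hT.four_mul_le_ncard_nonadj hω (hA ha)
  have hcount := ncard_sep_le_add_ncard_sdiff_union (L i) A B (fun u ↦ ¬ G.Adj a u)
  have hAa := ncard_le_ncard (sep_subset A fun u ↦ ¬ G.Adj a u)
  have hBa := hfew a ha
  have : G.cliqueNum ^ s ≤ G.cliqueNum ^ (s+5) := Nat.pow_le_pow_right (by omega) (by omega)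
  have : G.cliqueNum ^ (s+3) ≤ G.cliqueNum ^ (s+5) := Nat.pow_le_pow_right (by omega) (by omega)
  omega

theorem IsOptimalTemplate.two_mul_pow_le_ncard_right (hT : IsOptimalTemplate G s L0 L)
    (hω : 2 ≤ G.cliqueNum) (hA : A ⊆ L i) (hB : B ⊆ L i)
    (hrest : (L i \ (A ∪ B)).ncard ≤ G.cliqueNum ^ (s+3))
    (hfew : ∀ v ∈ A, {u ∈ B | ¬ G.Adj v u}.ncard < G.cliqueNum ^ s) (hAne : A.Nonempty)
    (hB14 : 14 * G.cliqueNum ^ (s+1) ≤ B.ncard) :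
    2 * G.cliqueNum ^ (s+5) ≤ B.ncard := by
  obtain ⟨-, -, -, -, hsize, -⟩ := hT.1
  set P := G.cliqueNum ^ (s+5)
  have hbad := G.ncard_many_nonadj_mul_lt hAne hfew P
  have hA14 : A.ncard * G.cliqueNum ^ s ≤ B.ncard * P :=
    calc A.ncard * G.cliqueNum ^ s ≤ 14 * G.cliqueNum ^ (s+6) * G.cliqueNum ^ s := by
          gcongr; exact (ncard_le_ncard hA).trans (hsize i).2
      _ = 14 * G.cliqueNum ^ (s+1) * P := by ring
      _ ≤ B.ncard * P := by gcongr
  obtain ⟨u, huB, hu⟩ := sdiff_nonempty_of_ncard_lt_ncard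
    (Nat.lt_of_mul_lt_mul_right (hbad.trans_le hA14))
  have hu : {a ∈ A | ¬ G.Adj u a}.ncard < P := not_le.1 fun h ↦ hu ⟨huB, h⟩
  have h4 := hT.four_mul_le_ncard_nonadj hω (hB huB)
  have hcount := ncard_sep_le_add_ncard_sdiff_union (L i) A B (fun w ↦ ¬ G.Adj u w)
  have hBu := ncard_le_ncard (sep_subset B fun w ↦ ¬ G.Adj u w)
  have : G.cliqueNum ^ (s+3) ≤ P := Nat.pow_le_pow_right (by omega) (by omega)
  omega

theorem IsOptimalTemplate.ncard_right_lt_two_mul_pow (hT : IsOptimalTemplate G s L0 L)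
    (hω : 4 ≤ G.cliqueNum) (hAB : Disjoint A B) (hA : A ⊆ L i) (hB : B ⊆ L i)
    (hrest : (L i \ (A ∪ B)).ncard ≤ G.cliqueNum ^ (s+3))
    (hfew : ∀ v ∈ A, {u ∈ B | ¬ G.Adj v u}.ncard < G.cliqueNum ^ s)
    (hAsize : G.cliqueNum ^ (s+5) ≤ A.ncard) :
    B.ncard < 2 * G.cliqueNum ^ (s+5) := by
  obtain ⟨-, -, -, -, hsize, -⟩ := hT.1
  set P := G.cliqueNum ^ (s+5)
  set q := G.cliqueNum ^ (s+3)
  have hqP : 16 * q ≤ P :=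
    calc 16 * q ≤ G.cliqueNum ^ 2 * q := by gcongr; nlinarith
      _ = P := by ring
  have hsq : G.cliqueNum ^ s ≤ q := Nat.pow_le_pow_right (by omega) (by omega)
  have hP : 0 < P := by positivity
  have hAne : A.Nonempty := nonempty_of_ncard_ne_zero (by omega)
  set Bad := {u ∈ B | q + 1 ≤ {a ∈ A | ¬ G.Adj u a}.ncard}
  have hBad : Bad.ncard < 14 * q := by
    have hbad : Bad.ncard * (q + 1) < A.ncard * G.cliqueNum ^ s :=
      G.ncard_many_nonadj_mul_lt hAne hfew (q + 1)
    have : A.ncard * G.cliqueNum ^ s ≤ 14 * q * q :=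
      calc A.ncard * G.cliqueNum ^ s ≤ 14 * G.cliqueNum ^ (s+6) * G.cliqueNum ^ s := by
            gcongr; exact (ncard_le_ncard hA).trans (hsize i).2
        _ = 14 * q * q := by ring
    nlinarith
  by_contra! hBsize
  have hD : (B \ Bad).ncard + Bad.ncard = B.ncard :=
    ncard_sdiff_add_ncard_of_subset (sep_subset _ _)
  have hsplit := hT.le_ncard_sdiff_of_split (A := A) (D := B \ Bad) hA
    (sdiff_subset.trans hB) (hAB.mono_right sdiff_subset) hAsize (by omega)
    (fun v hv ↦ (ncard_le_ncard (t := {u ∈ B | ¬ G.Adj v u}) fun u hu ↦ ⟨hu.1.1, hu.2⟩).trans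
      (hsq.trans' (hfew v hv).le))
    (fun v ⟨hvB, hvBad⟩ ↦ not_lt.1 fun h ↦ hvBad ⟨hvB, h⟩)
  have hcover : L i \ (A ∪ (B \ Bad)) ⊆ (L i \ (A ∪ B)) ∪ Bad := by
    rintro x ⟨hx, hxAD⟩
    by_cases hxB : x ∈ B
    · exact Or.inr (by_contra fun h ↦ hxAD (Or.inr ⟨hxB, h⟩))
    · exact Or.inl ⟨hx, fun h ↦ h.elim (fun h ↦ hxAD (Or.inl h)) hxB⟩
  have := (ncard_le_ncard hcover).trans (ncard_union_le _ _)
  omega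

end

theorem template_linked_general {V : Type*} [Fintype V] (G : SimpleGraph V) (s : ℕ)
    (hω : 4 ≤ G.cliqueNum) (L0 : Set V) (k : ℕ) (hk : 0 < k) (L : Fin k → Set V)
    (hT : IsOptimalTemplate G s L0 L)
    (A B : Set V) (hAB : Disjoint A B) (hA : A ⊆ L ⟨0, hk⟩) (hB : B ⊆ L ⟨0, hk⟩)
    (hrest : (L ⟨0, hk⟩ \ (A ∪ B)).ncard ≤ G.cliqueNum ^ (s+3))
    (hfew : ∀ v ∈ A, ({u ∈ B | ¬ G.Adj v u}).ncard < G.cliqueNum ^ s) :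
    B.ncard < 14 * G.cliqueNum ^ (s+1) ∨ A = ∅ := by
  by_contra! h
  obtain ⟨hB14, a, ha⟩ := h
  have hAsize := hT.pow_le_ncard_left (by omega) hA hrest hfew ha
  have hBlarge := hT.two_mul_pow_le_ncard_right (by omega) hA hB hrest hfew ⟨a, ha⟩ hB14
  have hBsmall := hT.ncard_right_lt_two_mul_pow hω hAB hA hB hrest hfew hAsize
  omega

/-- If `ω ≥ 4` and `A, B` are disjoint subsets of `L 1` with `|L 1 \ (A ∪ B)| ≤ ω^{s+3}` such
that every vertex of `A` has fewer than `ω^s` non-neighbours in `B`, then `|B| < 14 ω^{s+1}`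
or `A = ∅`. -/
theorem template_linked {V : Type*} [Fintype V] (G : SimpleGraph V) (s : ℕ) (hs : 1 ≤ s)
    (hω : 4 ≤ G.cliqueNum) (L0 : Set V) (k : ℕ) (hk : 0 < k) (L : Fin k → Set V)
    (hT : IsOptimalTemplate G s L0 L)
    (hval : 28 * G.cliqueNum ^ (s+6) ≤ templateValue G s L0 L)
    (A B : Set V) (hAB : Disjoint A B) (hA : A ⊆ L ⟨0, hk⟩) (hB : B ⊆ L ⟨0, hk⟩)
    (hrest : (L ⟨0, hk⟩ \ (A ∪ B)).ncard ≤ G.cliqueNum ^ (s+3))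
    (hfew : ∀ v ∈ A, ({u ∈ B | ¬ G.Adj v u}).ncard < G.cliqueNum ^ s) :
    B.ncard < 14 * G.cliqueNum ^ (s+1) ∨ A = ∅ :=
  template_linked_general G s hω L0 k hk L hT A B hAB hA hB hrest hfew
end

section
/- Let s ≥ 1 be an integer, let G be an H_s-free graph with clique number ω, and let 𝓛 = (L_0, L_1, …, L_k) be an optimal s-template in G. Let I ⊆ {1,…,k}, let u ∈ M_I, and let j ∈ {1,…,k} ∖ I. Then for each i ∈ I, there are fewer than ω^s vertices v adjacent to u such that v ∈ M_J for some J ⊆ {1,…,k} ∖ {i,j}. Hence there are fewer than ω^{s+1} vertices v adjacent to u such that v ∈ M_J for some J ⊆ {1,…,k} ∖ {j} with I ⊄ J. -/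
open SimpleGraph Set

/-!
Fix `i ∈ I` and a neighbour `x ∈ L i` of `u`. The neighbours `v` of `u` lying in some `M_J` with
`i, j ∉ J` see neither `x` nor `L j`, while `x` has at least `ω^s` neighbours in `L j`, none of
which is adjacent to `u`. By Ramsey's theorem, any `ω^s` vertices of a graph with clique number
`ω ≥ 2` contain a stable set of size `s`; so if there were `ω^s` such `v`, stable `s`-sets among
them and among the neighbours of `x` in `L j` would form, together with the edge `ux`, an induced
`H_s`. The second bound follows by summing over `i ∈ I`, since `|I| ≤ k ≤ ω`: choosing greedily one
vertex in each of `ω + 1` parts of a template would give a clique of size `ω + 1`.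
-/

theorem Nat.add_choose_le_pow {w : ℕ} (hw : 2 ≤ w) : ∀ r, (w + r).choose r ≤ w ^ (r + 1)
  | 0 => by rw [Nat.choose_zero_right, pow_one]; omega
  | 1 => by rw [Nat.choose_one_right, pow_succ, pow_one]; nlinarith
  | r + 2 => by
    refine Nat.le_of_mul_le_mul_right ?_ (show 0 < r + 2 by omega)
    calc (w + (r + 2)).choose (r + 2) * (r + 2)
        = (w + (r + 1) + 1) * (w + (r + 1)).choose (r + 1) :=
          (Nat.add_one_mul_choose_eq _ _).symm
      _ ≤ (w * (r + 2)) * w ^ (r + 2) := Nat.mul_le_mul (by nlinarith) (add_choose_le_pow hw _)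
      _ = w ^ (r + 2 + 1) * (r + 2) := by ring

theorem Finset.set_ncard_biUnion_lt {α ι : Type*} (t : Finset ι) (X : ι → Set α) {m n : ℕ}
    (ht : t.card ≤ m) (hm : 0 < m) (hn : 0 < n) (hX : ∀ i ∈ t, (X i).ncard < n) :
    (⋃ i ∈ t, X i).ncard < m * n :=
  calc (⋃ i ∈ t, X i).ncard ≤ ∑ i ∈ t, (X i).ncard := t.set_ncard_biUnion_le X
    _ ≤ t.card * (n - 1) := sum_le_card_nsmul _ _ _ fun i hi => Nat.le_sub_one_of_lt (hX i hi)
    _ ≤ m * (n - 1) := Nat.mul_le_mul_right _ ht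
    _ < m * n := Nat.mul_lt_mul_of_pos_left (by omega) hm

namespace SimpleGraph

variable {V : Type*} {G : SimpleGraph V}

open Finset in
theorem exists_isNClique_or_isNIndepSet_of_choose_le (G : SimpleGraph V) (t s : ℕ)
    {A : Finset V} (hA : (t + s).choose t ≤ #A) :
    (∃ B ⊆ A, G.IsNClique (t + 1) B) ∨ ∃ B ⊆ A, G.IsNIndepSet (s + 1) B := by
  have hne {t s : ℕ} {A : Finset V} (h : (t + s).choose t ≤ #A) : A.Nonempty :=
    card_pos.mp ((Nat.choose_pos (by omega)).trans_le h)
  induction t generalizing s A with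
  | zero =>
    obtain ⟨v, hv⟩ := hne hA
    exact .inl ⟨{v}, by simpa, isNClique_singleton.mpr rfl⟩
  | succ t iht =>
    induction s generalizing A with
    | zero =>
      obtain ⟨v, hv⟩ := hne hA
      exact .inr ⟨{v}, by simpa, G.isNClique_compl.mp (isNClique_singleton.mpr rfl)⟩
    | succ s ihs =>
      classical
      obtain ⟨v, hv⟩ := hne hA
      set N := (A.erase v).filter (G.Adj v)
      set M := (A.erase v).filter (¬ G.Adj v ·)
      have hNA : N ⊆ A := (filter_subset _ _).trans (erase_subset _ _)
      have hMA : M ⊆ A := (filter_subset _ _).trans (erase_subset _ _)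
      have hcard : #N + #M + 1 = #A := by
        rw [card_filter_add_card_filter_not, card_erase_add_one hv]
      have hpascal : (t + 1 + (s + 1)).choose (t + 1) =
          (t + (s + 1)).choose t + (t + 1 + s).choose (t + 1) := by
        rw [show t + 1 + (s + 1) = t + (s + 1) + 1 by ring, Nat.choose_succ_succ',
          show t + (s + 1) = t + 1 + s by ring]
      rcases le_or_gt ((t + (s + 1)).choose t) #N with hN | hN
      · rcases iht (s + 1) hN with ⟨B, hBN, hB⟩ | ⟨B, hBN, hB⟩
        · exact .inl ⟨insert v B, insert_subset hv (hBN.trans hNA),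
            hB.insert fun b hb => (mem_filter.mp (hBN hb)).2⟩
        · exact .inr ⟨B, hBN.trans hNA, hB⟩
      · have hM : (t + 1 + s).choose (t + 1) ≤ #M := by omega
        rcases ihs hM with ⟨B, hBM, hB⟩ | ⟨B, hBM, hB⟩
        · exact .inl ⟨B, hBM.trans hMA, hB⟩
        · refine .inr ⟨insert v B, insert_subset hv (hBM.trans hMA), G.isNClique_compl.mp ?_⟩
          refine (G.isNClique_compl.mpr hB).insert fun b hb => ?_
          obtain ⟨hbA, hvb⟩ := mem_filter.mp (hBM hb)
          exact (compl_adj G v b).mpr ⟨(ne_of_mem_erase hbA).symm, hvb⟩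

theorem exists_isNIndepSet_subset_of_pow_cliqueNum_le [Finite V] (hw : 2 ≤ G.cliqueNum) (s : ℕ)
    {A : Set V} (hA : G.cliqueNum ^ s ≤ A.ncard) :
    ∃ S : Finset V, ↑S ⊆ A ∧ G.IsNIndepSet s S := by
  classical
  obtain _ | r := s
  · exact ⟨∅, by simp, by simp [isNIndepSet_iff]⟩
  have hAf : A.Finite := A.toFinite
  have hbound : (G.cliqueNum + r).choose G.cliqueNum ≤ hAf.toFinset.card := by
    rw [Nat.choose_symm_add, ← Set.ncard_eq_toFinset_card A hAf]
    exact (Nat.add_choose_le_pow hw r).trans hA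
  rcases G.exists_isNClique_or_isNIndepSet_of_choose_le _ r hbound with ⟨B, -, hB⟩ | ⟨S, hSA, hS⟩
  · have := hB.isClique.card_le_cliqueNum
    rw [hB.card_eq] at this
    omega
  · exact ⟨S, by simpa using hSA, hS⟩

theorem Adj.two_le_cliqueNum [Finite V] {u x : V} (hux : G.Adj u x) : 2 ≤ G.cliqueNum := by
  classical
  have : ({u, x} : Finset V).card ≤ G.cliqueNum :=
    IsClique.card_le_cliqueNum (tc := by simpa [isClique_pair] using fun _ => hux)
  rwa [Finset.card_pair hux.ne] at this

open Finset in
theorem exists_isNClique_subset_biUnion {ι : Type*} (G : SimpleGraph V)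
    (L : ι → Set V) (d : ℕ) (J : Finset ι)
    (hnon : ∀ i ∈ J, ∀ i' ∈ J, i ≠ i' → ∀ v ∈ L i, {w ∈ L i' | ¬ G.Adj v w}.ncard ≤ d)
    (hbig : ∀ i ∈ J, #J * d < (L i).ncard) :
    ∃ C : Finset V, ↑C ⊆ ⋃ i ∈ J, L i ∧ G.IsNClique #J C := by
  classical
  induction J using Finset.induction_on with
  | empty => exact ⟨∅, by simp, by simp⟩
  | insert a J ha ih =>
    have hcardJ : #(insert a J) = #J + 1 := card_insert_of_notMem ha
    obtain ⟨C, hCJ, hC⟩ := ih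
      (fun i hi i' hi' => hnon i (mem_insert_of_mem hi) i' (mem_insert_of_mem hi'))
      (fun i hi => (Nat.mul_le_mul_right _ (by omega)).trans_lt (hbig i (mem_insert_of_mem hi)))
    set Bad := ⋃ c ∈ C, {w ∈ L a | ¬ G.Adj c w}
    have hBad : Bad.ncard < (L a).ncard := by
      calc Bad.ncard ≤ ∑ c ∈ C, {w ∈ L a | ¬ G.Adj c w}.ncard := C.set_ncard_biUnion_le _
        _ ≤ #C * d := by
          refine sum_le_card_nsmul _ _ _ fun c hc => ?_
          obtain ⟨i, hi, hci⟩ := Set.mem_iUnion₂.mp (hCJ hc)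
          exact hnon i (mem_insert_of_mem hi) a (mem_insert_self a J) (by grind) c hci
        _ < (L a).ncard := by
          rw [hC.card_eq]
          exact (Nat.mul_le_mul_right _ (by omega)).trans_lt (hbig a (mem_insert_self a J))
    obtain ⟨y, hya, hyBad⟩ := Set.exists_mem_notMem_of_ncard_lt_ncard hBad
      ((Set.finite_of_ncard_pos (Nat.zero_lt_of_lt hBad)).subset
        (Set.iUnion₂_subset fun _ _ => Set.sep_subset _ _))
    refine ⟨insert y C, ?_, hcardJ ▸ hC.insert fun c hc => ?_⟩
    · rw [coe_insert, Set.insert_subset_iff, set_biUnion_insert]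
      exact ⟨.inl hya, hCJ.trans Set.subset_union_right⟩
    · by_contra hyc
      exact hyBad (Set.mem_biUnion hc ⟨hya, fun h => hyc h.symm⟩)

end SimpleGraph

section DoubleStar

variable {V : Type*} {G : SimpleGraph V} {s : ℕ}

theorem isInducedFree_iff_not_isIndContained {W : Type*} {H : SimpleGraph W} :
    IsInducedFree G H ↔ ¬ H ⊴ G := by
  simp only [isIndContained_iff_exists_iso_induce, IsInducedFree, not_exists]
  exact forall_congr' fun S => not_congr ⟨fun ⟨e⟩ => ⟨e.symm⟩, fun ⟨e⟩ => ⟨e.symm⟩⟩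

/-- The centres of `H_s` are `inl 0` and `inl 1`; the leaves of centre `0` are the `inr (inl m)`,
those of centre `1` the `inr (inr m)`. -/
def doubleStarEquiv (s : ℕ) : Fin 2 ⊕ Fin s ⊕ Fin s ≃ Fin (2 * s + 2) :=
  ((Equiv.sumCongr (.refl _) finSumFinEquiv).trans finSumFinEquiv).trans (finCongr (by ring))

theorem doubleStarEquiv_inl (i : Fin 2) : (doubleStarEquiv s (.inl i) : ℕ) = i := rfl

theorem doubleStarEquiv_inr_inl (m : Fin s) : (doubleStarEquiv s (.inr (.inl m)) : ℕ) = 2 + m :=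
  rfl

theorem doubleStarEquiv_inr_inr (m : Fin s) :
    (doubleStarEquiv s (.inr (.inr m)) : ℕ) = 2 + (s + m) := rfl

theorem doubleStarGraph_isIndContained {u x : V} {a b : Fin s → V} (hux : G.Adj u x)
    (ha : Function.Injective a) (hb : Function.Injective b)
    (hua : ∀ m, G.Adj u (a m)) (hxb : ∀ m, G.Adj x (b m))
    (hxa : ∀ m, ¬ G.Adj x (a m)) (hub : ∀ m, ¬ G.Adj u (b m))
    (haa : ∀ m m', ¬ G.Adj (a m) (a m')) (hbb : ∀ m m', ¬ G.Adj (b m) (b m'))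
    (hab : ∀ m m', ¬ G.Adj (a m) (b m')) (hxa' : ∀ m, x ≠ a m) (hub' : ∀ m, u ≠ b m) :
    doubleStarGraph s ⊴ G := by
  set g : Fin 2 ⊕ Fin s ⊕ Fin s → V := Sum.elim ![u, x] (Sum.elim a b)
  have hg : Function.Injective g := by
    rintro (i | m | m) (i' | m' | m') h <;> (try fin_cases i) <;> (try fin_cases i')
    all_goals simp only [g, Sum.elim_inl, Sum.elim_inr, Fin.zero_eta, Fin.mk_one, Fin.isValue,
      Matrix.cons_val_zero, Matrix.cons_val_one, Matrix.cons_val_fin_one] at h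
    all_goals grind [SimpleGraph.irrefl, Function.Injective]
  have hadj : ∀ p q, G.Adj (g p) (g q) ↔
      (doubleStarGraph s).Adj (doubleStarEquiv s p) (doubleStarEquiv s q) := by
    rintro (i | m | m) (i' | m' | m') <;> (try fin_cases i) <;> (try fin_cases i')
    all_goals simp only [doubleStarGraph, fromRel_adj, ne_eq, Fin.ext_iff, doubleStarEquiv_inl,
      doubleStarEquiv_inr_inl, doubleStarEquiv_inr_inr, g, Sum.elim_inl, Sum.elim_inr, Fin.zero_eta,
      Fin.mk_one, Fin.isValue, Matrix.cons_val_zero, Matrix.cons_val_one, Matrix.cons_val_fin_one]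
    all_goals grind [SimpleGraph.adj_symm, SimpleGraph.irrefl]
  exact ⟨(show (doubleStarGraph s).comap (doubleStarEquiv s) ↪g G from ⟨⟨g, hg⟩, hadj _ _⟩).comp
    (Iso.comap (doubleStarEquiv s) _).symm.toEmbedding⟩

theorem doubleStarGraph_isIndContained_of_isNIndepSet {u x : V} {S T : Finset V}
    (hux : G.Adj u x) (hS : G.IsNIndepSet s S) (hT : G.IsNIndepSet s T)
    (huS : ∀ v ∈ S, G.Adj u v ∧ ¬ G.Adj x v) (hxT : ∀ y ∈ T, G.Adj x y ∧ ¬ G.Adj u y)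
    (hST : ∀ v ∈ S, ∀ y ∈ T, ¬ G.Adj v y) (hxS : x ∉ S) (huT : u ∉ T) :
    doubleStarGraph s ⊴ G := by
  set a : Fin s → V := fun m => (S.equivFinOfCardEq hS.card_eq).symm m
  set b : Fin s → V := fun m => (T.equivFinOfCardEq hT.card_eq).symm m
  have ha : ∀ m, a m ∈ S := fun m => Subtype.prop _
  have hb : ∀ m, b m ∈ T := fun m => Subtype.prop _
  have hindep {R : Finset V} (hR : G.IsIndepSet R) {v w : V} (hv : v ∈ R) (hw : w ∈ R) :
      ¬ G.Adj v w := fun h => hR hv hw h.ne h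
  exact doubleStarGraph_isIndContained hux
    (Subtype.val_injective.comp (Equiv.injective _))
    (Subtype.val_injective.comp (Equiv.injective _))
    (fun m => (huS _ (ha m)).1) (fun m => (hxT _ (hb m)).1)
    (fun m => (huS _ (ha m)).2) (fun m => (hxT _ (hb m)).2)
    (fun m m' => hindep hS.isIndepSet (ha m) (ha m'))
    (fun m m' => hindep hT.isIndepSet (hb m) (hb m'))
    (fun m m' => hST _ (ha m) _ (hb m')) (fun m h => hxS (h ▸ ha m)) (fun m h => huT (h ▸ hb m))

theorem ncard_lt_or_ncard_lt_of_isInducedFree_doubleStarGraph [Finite V]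
    (hfree : IsInducedFree G (doubleStarGraph s)) {u x : V} (hux : G.Adj u x) {X Y : Set V}
    (hX : ∀ v ∈ X, G.Adj u v ∧ ¬ G.Adj x v) (hY : ∀ y ∈ Y, G.Adj x y ∧ ¬ G.Adj u y)
    (hXY : ∀ v ∈ X, ∀ y ∈ Y, ¬ G.Adj v y) (hxX : x ∉ X) (huY : u ∉ Y) :
    X.ncard < G.cliqueNum ^ s ∨ Y.ncard < G.cliqueNum ^ s := by
  by_contra! ⟨hXc, hYc⟩
  obtain ⟨S, hSX, hS⟩ := exists_isNIndepSet_subset_of_pow_cliqueNum_le hux.two_le_cliqueNum s hXc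
  obtain ⟨T, hTY, hT⟩ := exists_isNIndepSet_subset_of_pow_cliqueNum_le hux.two_le_cliqueNum s hYc
  exact isInducedFree_iff_not_isIndContained.mp hfree
    (doubleStarGraph_isIndContained_of_isNIndepSet hux hS hT (fun v hv => hX v (hSX hv))
      (fun y hy => hY y (hTY hy)) (fun v hv y hy => hXY v (hSX hv) y (hTY hy))
      (fun h => hxX (hSX h)) (fun h => huY (hTY h)))

end DoubleStar

namespace IsTemplate

variable {V : Type*} {G : SimpleGraph V} {s : ℕ} {L0 : Set V} {k : ℕ} {L : Fin k → Set V}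

theorem le_cliqueNum_s12 [Finite V] (hT : IsTemplate G s L0 L) (hw : 2 ≤ G.cliqueNum) :
    k ≤ G.cliqueNum := by
  obtain ⟨-, -, -, -, hsize, hnon⟩ := hT
  by_contra! hk
  obtain ⟨J, -, hJ⟩ := Finset.exists_subset_card_eq (s := (Finset.univ : Finset (Fin k)))
    (n := G.cliqueNum + 1) (by simpa using hk)
  have hbig : ∀ i ∈ J, J.card * G.cliqueNum ^ (s + 3) < (L i).ncard := fun i _ => by
    refine lt_of_lt_of_le ?_ (hsize i).1
    rw [hJ, show s + 5 = 2 + (s + 3) by ring, pow_add G.cliqueNum 2]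
    exact Nat.mul_lt_mul_of_pos_right (show G.cliqueNum + 1 < G.cliqueNum ^ 2 by nlinarith)
      (by positivity)
  obtain ⟨C, -, hC⟩ := G.exists_isNClique_subset_biUnion L _ J
    (fun i _ i' _ hii' => hnon i i' hii') hbig
  have := hC.isClique.card_le_cliqueNum
  rw [hC.card_eq] at this
  omega

theorem pow_le_ncard_adj (hT : IsTemplate G s L0 L) (hw : 2 ≤ G.cliqueNum) {i j : Fin k}
    (hij : i ≠ j) {x : V} (hx : x ∈ L i) : G.cliqueNum ^ s ≤ {y ∈ L j | G.Adj x y}.ncard := by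
  obtain ⟨-, -, -, -, hsize, hnon⟩ := hT
  have hsplit : {y ∈ L j | G.Adj x y}.ncard + {y ∈ L j | ¬ G.Adj x y}.ncard = (L j).ncard :=
    Set.ncard_inter_add_ncard_sdiff_eq_ncard (L j) (G.neighborSet x)
      (Set.finite_of_ncard_pos (lt_of_lt_of_le (by positivity) (hsize j).1))
  have : G.cliqueNum ^ s + G.cliqueNum ^ (s + 3) ≤ G.cliqueNum ^ (s + 5) := by
    have h3 : 1 ≤ G.cliqueNum ^ 3 := Nat.one_le_pow _ _ (by omega)
    have h2 : 2 ≤ G.cliqueNum ^ 2 := by nlinarith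
    rw [pow_add _ s 5, pow_add _ s 3, ← mul_one_add, show 5 = 2 + 3 by rfl, pow_add]
    exact Nat.mul_le_mul_left _ (by nlinarith)
  have := (hsize j).1
  have := hnon i j hij x hx
  omega

theorem ncard_lt_of_isInducedFree [Finite V] (hT : IsTemplate G s L0 L)
    (hfree : IsInducedFree G (doubleStarGraph s)) {i j : Fin k} (hij : i ≠ j) {u x : V}
    (hu : u ∉ templateVerts L0 L) (hx : x ∈ L i) (hux : G.Adj u x)
    (huj : ∀ y ∈ L j, ¬ G.Adj u y) {X : Set V}
    (hX : ∀ v ∈ X, G.Adj u v ∧ v ∉ templateVerts L0 L ∧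
      (∀ y ∈ L i, ¬ G.Adj v y) ∧ ∀ y ∈ L j, ¬ G.Adj v y) :
    X.ncard < G.cliqueNum ^ s := by
  have hverts {l : Fin k} {y : V} (hy : y ∈ L l) : y ∈ templateVerts L0 L :=
    .inr (Set.mem_iUnion_of_mem l hy)
  refine (ncard_lt_or_ncard_lt_of_isInducedFree_doubleStarGraph hfree hux
    (Y := {y ∈ L j | G.Adj x y}) (fun v hv => ⟨(hX v hv).1, fun h => (hX v hv).2.2.1 x hx h.symm⟩)
    (fun y hy => ⟨hy.2, huj y hy.1⟩) (fun v hv y hy => (hX v hv).2.2.2 y hy.1)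
    (fun h => (hX x h).2.1 (hverts hx)) (fun h => hu (hverts h.1))).resolve_right ?_
  exact (hT.pow_le_ncard_adj hux.two_le_cliqueNum hij hx).not_gt

end IsTemplate

theorem not_adj_of_mem_templatePart {V : Type*} {G : SimpleGraph V} {s : ℕ} {L0 : Set V} {k : ℕ}
    {L : Fin k → Set V} {J : Set (Fin k)} {v : V} (hv : v ∈ templatePart G s L0 L J) {i : Fin k}
    (hi : i ∉ J) : ∀ y ∈ L i, ¬ G.Adj v y :=
  fun y hy h => hi ((hv.2.2 i).mp ⟨y, hy, h⟩)

theorem template_incomp_general {V : Type*} [Fintype V] (G : SimpleGraph V) (s : ℕ)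
    (hfree : IsInducedFree G (doubleStarGraph s))
    (L0 : Set V) (k : ℕ) (L : Fin k → Set V) (hT : IsOptimalTemplate G s L0 L)
    (I : Set (Fin k)) (u : V) (hu : u ∈ templatePart G s L0 L I)
    (j : Fin k) (hj : j ∉ I) :
    (∀ i ∈ I,
      ({v | G.Adj u v ∧ ∃ J : Set (Fin k), i ∉ J ∧ j ∉ J ∧
        v ∈ templatePart G s L0 L J}).ncard < G.cliqueNum ^ s) ∧
    ({v | G.Adj u v ∧ ∃ J : Set (Fin k), j ∉ J ∧ ¬ I ⊆ J ∧
      v ∈ templatePart G s L0 L J}).ncard < G.cliqueNum ^ (s+1) := by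
  classical
  obtain ⟨-, x₀, -, hux₀⟩ := hu.1.2
  have hw := hux₀.two_le_cliqueNum
  set X : Fin k → Set V := fun i =>
    {v | G.Adj u v ∧ ∃ J : Set (Fin k), i ∉ J ∧ j ∉ J ∧ v ∈ templatePart G s L0 L J}
  have hX : ∀ i ∈ I, (X i).ncard < G.cliqueNum ^ s := fun i hi => by
    obtain ⟨x, hx, hux⟩ := (hu.2.2 i).mpr hi
    refine hT.1.ncard_lt_of_isInducedFree hfree (ne_of_mem_of_not_mem hi hj) hu.1.1 hx hux
      (not_adj_of_mem_templatePart hu hj) fun v ⟨huv, J, hiJ, hjJ, hv⟩ => ?_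
    exact ⟨huv, hv.1.1, not_adj_of_mem_templatePart hv hiJ, not_adj_of_mem_templatePart hv hjJ⟩
  have hsub : {v | G.Adj u v ∧ ∃ J : Set (Fin k), j ∉ J ∧ ¬ I ⊆ J ∧
      v ∈ templatePart G s L0 L J} ⊆ ⋃ i ∈ I.toFinset, X i := by
    rintro v ⟨huv, J, hjJ, hIJ, hv⟩
    obtain ⟨i, hi, hiJ⟩ := Set.not_subset.mp hIJ
    exact Set.mem_biUnion (Set.mem_toFinset.mpr hi) ⟨huv, J, hiJ, hjJ, hv⟩
  have hI : I.toFinset.card ≤ G.cliqueNum :=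
    (Finset.card_le_univ _).trans ((Fintype.card_fin k).trans_le (hT.1.le_cliqueNum_s12 hw))
  refine ⟨hX, (Set.ncard_le_ncard hsub).trans_lt ?_⟩
  rw [pow_succ']
  exact I.toFinset.set_ncard_biUnion_lt X hI (by omega) (by positivity)
    fun i hi => hX i (Set.mem_toFinset.mp hi)

/-- If `u ∈ M_I` and `j ∉ I`, then for each `i ∈ I` fewer than `ω^s` neighbours `v` of `u`
lie in some `M_J` with `J ⊆ {1,…,k} \ {i,j}`; hence fewer than `ω^{s+1}` neighbours `v` of
`u` lie in some `M_J` with `J ⊆ {1,…,k} \ {j}` and `I ⊄ J`. -/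
theorem template_incomp {V : Type*} [Fintype V] (G : SimpleGraph V) (s : ℕ) (hs : 1 ≤ s)
    (hfree : IsInducedFree G (doubleStarGraph s))
    (L0 : Set V) (k : ℕ) (L : Fin k → Set V) (hT : IsOptimalTemplate G s L0 L)
    (I : Set (Fin k)) (u : V) (hu : u ∈ templatePart G s L0 L I)
    (j : Fin k) (hj : j ∉ I) :
    (∀ i ∈ I,
      ({v | G.Adj u v ∧ ∃ J : Set (Fin k), i ∉ J ∧ j ∉ J ∧
        v ∈ templatePart G s L0 L J}).ncard < G.cliqueNum ^ s) ∧
    ({v | G.Adj u v ∧ ∃ J : Set (Fin k), j ∉ J ∧ ¬ I ⊆ J ∧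
      v ∈ templatePart G s L0 L J}).ncard < G.cliqueNum ^ (s+1) :=
  template_incomp_general G s hfree L0 k L hT I u hu j hj
end
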